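/- Let z ∈ ℝ^C, let y be an index, and suppose z_y > z_j for all j ≠ y. For any perturbation Δ ∈ ℝ^C with z_y + Δ_y < max_{j≠y}(z_j + Δ_j), the squared Euclidean norm ‖Δ‖² is at least (z_y - z_s)²/2, where z_s = max_{j≠y} z_j. -/
import Mathlib


/-- Any latent-space perturbation that changes the predicted class has squared
Euclidean norm at least (z_y - z_s)²/2, where z_s is the second-largest logit. -/
theorem stmt_3 {C : ℕ} (hC : 1 < C) (z Δ : Fin C → ℝ) (y : Fin C)
    (hne : (Finset.univ.erase y).Nonempty)
    (hy : ∀ j, j ≠ y → z j < z y)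
    (hΔ : z y + Δ y < (Finset.univ.erase y).sup' hne (fun j => z j + Δ j)) :
    (z y - (Finset.univ.erase y).sup' hne z) ^ 2 / 2 ≤ ∑ j, (Δ j) ^ 2 := by
  obtain ⟨j, hj, hjv⟩ := Finset.exists_mem_eq_sup' hne (fun j => z j + Δ j)
  rw [hjv] at hΔ
  have hjy : j ≠ y := Finset.ne_of_mem_erase hj
  -- z s ≥ z j
  have hs : z j ≤ (Finset.univ.erase y).sup' hne z := Finset.le_sup' z hj
  -- z s < z y
  obtain ⟨k, hk, hkv⟩ := Finset.exists_mem_eq_sup' hne z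
  have hsy : (Finset.univ.erase y).sup' hne z < z y := by
    rw [hkv]; exact hy k (Finset.ne_of_mem_erase hk)
  set s := (Finset.univ.erase y).sup' hne z with hsdef
  have h1 : z y - s ≤ Δ j - Δ y := by linarith
  have h0 : 0 ≤ z y - s := by linarith
  have h2 : (z y - s) ^ 2 ≤ (Δ j - Δ y) ^ 2 := by nlinarith
  have h3 : Δ j ^ 2 + Δ y ^ 2 ≤ ∑ i, Δ i ^ 2 := by
    have : ∑ i ∈ ({j, y} : Finset (Fin C)), Δ i ^ 2 ≤ ∑ i, Δ i ^ 2 :=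
      Finset.sum_le_sum_of_subset_of_nonneg (Finset.subset_univ _)
        (fun i _ _ => sq_nonneg _)
    rwa [Finset.sum_pair hjy] at this
  nlinarith [sq_nonneg (Δ j + Δ y)]
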